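/- Let π: L(p) → L(q) be an admissible homomorphism. Then π maps the dualizing element ω = (t−2)c − Σ_{i=1}^t x_i of L(p) to the dualizing element ω' = (s−2)d − Σ_{j=1}^s z_j of L(q). -/

import Mathlib

open scoped BigOperators

def stringRelators {ι : Type} [DecidableEq ι] (p : ι → ℕ) : Set (ι → ℤ) :=
  { v | ∃ i j : ι, v = (p i : ℤ) • Pi.single i 1 - (p j : ℤ) • Pi.single j 1 }

abbrev StringGroup {ι : Type} [DecidableEq ι] (p : ι → ℕ) : Type :=
  (ι → ℤ) ⧸ AddSubgroup.closure (stringRelators p)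

def xgen {ι : Type} [DecidableEq ι] (p : ι → ℕ) (i : ι) : StringGroup p :=
  QuotientAddGroup.mk (Pi.single i 1)

def canon {ι : Type} [DecidableEq ι] (p : ι → ℕ) (i : ι) : StringGroup p :=
  (p i : ℤ) • xgen p i

def IsEffective {κ : Type} [DecidableEq κ] (q : κ → ℕ) (H : AddSubgroup (StringGroup q)) : Prop :=
  ∀ j : κ, ∀ ρ : StringGroup q →+ ZMod (q j),
    (∀ k, ρ (xgen q k) = if k = j then 1 else 0) →
    ∀ y : ZMod (q j), ∃ x ∈ H, ρ x = y

def Admissible {ι κ : Type} [DecidableEq ι] [DecidableEq κ]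
    (p : ι → ℕ) (q : κ → ℕ)
    (multp : StringGroup p → ℕ) (multq : StringGroup q → ℕ)
    (π : StringGroup p →+ StringGroup q) : Prop :=
  IsEffective q π.range ∧
  ∀ z ∈ Set.range π, (∑ᶠ x ∈ π ⁻¹' {z}, multp x) = multq z

/-!
Every element of `L(p)` has a unique normal form `g = ∑ l_j x_j + m c` with `0 ≤ l_j < p_j`;
its multiplicity is `(m + 1)⁺`, and Riemann–Roch reads `mult g - mult (ω - g) = m(g) + 1`.
Admissibility says `mult (π y) = ∑_{k ∈ ker π} mult (y + k)`. At `y = 0` every nonzero `k ∈ ker π`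
has multiplicity `0`, so all multiples of `k` have bounded degree: `ker π` lies in the finite kernel
of the degree map. Shifting `y` by large multiples of `c` makes every multiplicity affine, which
gives `π c = |ker π| c'` and `m(π y) + 1 = ∑_k (m(y + k) + 1)`. Summing Riemann–Roch over the
kernel then yields `mult (π ω - x) = mult (ω' - x)`, hence `m(π ω - x) = m(ω' - x)`, for `x` in the
image. Writing `π ω = ω' + δ`, the number of carries when adding `δ` to `ω' - x` is thus constant
on the image; as `ω'` has maximal coefficients `l_j = q_j - 1` and effectiveness makes each
`l_j(ω' - x)` vanish for some `x`, `δ` has no `x_j`-part and no carries, so `δ = 0`.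
-/

open Finset Filter

theorem eq_zero_of_forall_intCast_mul_le {K : Type*} [Field K] [LinearOrder K]
    [IsStrictOrderedRing K] [Archimedean K] {a C : K} (h : ∀ z : ℤ, z * a ≤ C) : a = 0 := by
  by_contra ha
  have habs (z : ℤ) : z * |a| ≤ C := by
    rcases abs_choice a with h' | h' <;> rw [h']
    · exact h z
    · simpa using h (-z)
  obtain ⟨z, hz⟩ := exists_int_gt (C / |a|)
  exact (habs z).not_gt ((div_lt_iff₀ (abs_pos.2 ha)).1 hz)

theorem intCast_div_natCast_eq_ediv_add_emod (a : ℤ) (n : ℕ) :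
    (a : ℚ) / n = ((a / n : ℤ) : ℚ) + ((a % n : ℤ) : ℚ) / n := by
  rw [← Rat.floor_intCast_div_natCast, ← Int.fract_div_intCast_eq_div_intCast_mod,
    Int.floor_add_fract]

namespace StringGroup

variable {ι : Type} [DecidableEq ι] (p : ι → ℕ)

theorem canon_eq_canon (i j : ι) : canon p i = canon p j := by
  have h : (p i : ℤ) • Pi.single i (1 : ℤ) - (p j : ℤ) • Pi.single j 1 ∈
      AddSubgroup.closure (stringRelators p) := AddSubgroup.subset_closure ⟨i, j, rfl⟩
  rw [← QuotientAddGroup.eq_zero_iff, QuotientAddGroup.mk_sub, QuotientAddGroup.mk_zsmul,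
    QuotientAddGroup.mk_zsmul] at h
  exact sub_eq_zero.1 h

def residue (j : ι) : StringGroup p →+ ZMod (p j) :=
  QuotientAddGroup.lift _ ((Int.castAddHom (ZMod (p j))).comp (Pi.evalAddMonoidHom _ j)) <| by
    rw [AddSubgroup.closure_le]
    rintro _ ⟨a, b, rfl⟩
    simp only [SetLike.mem_coe, AddMonoidHom.mem_ker, AddMonoidHom.comp_apply,
      Pi.evalAddMonoidHom_apply, Pi.sub_apply, Pi.smul_apply, Pi.single_apply, smul_eq_mul]
    split_ifs <;> subst_vars <;> simp

theorem residue_mk (j : ι) (v : ι → ℤ) :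
    residue p j (QuotientAddGroup.mk v) = (v j : ZMod (p j)) := rfl

theorem residue_xgen (j k : ι) : residue p j (xgen p k) = if k = j then 1 else 0 := by
  simp [xgen, residue_mk, Pi.single_apply, eq_comm]

theorem residue_canon (j i : ι) : residue p j (canon p i) = 0 := by
  rw [canon_eq_canon p i j, canon, map_zsmul, residue_xgen]
  simp

def lcoeff (j : ι) (g : StringGroup p) : ℤ := (residue p j g).val

theorem lcoeff_nonneg (j : ι) (g : StringGroup p) : 0 ≤ lcoeff p j g := Int.natCast_nonneg _

theorem lcoeff_zero (j : ι) : lcoeff p j 0 = 0 := by simp [lcoeff]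

variable {p}

theorem lcoeff_lt (j : ι) [NeZero (p j)] (g : StringGroup p) : lcoeff p j g < p j :=
  Int.ofNat_lt.2 (ZMod.val_lt _)

theorem sub_one_sub_lcoeff_bounds (g : StringGroup p) (j : ι) [NeZero (p j)] :
    0 ≤ (p j : ℤ) - 1 - lcoeff p j g ∧ (p j : ℤ) - 1 - lcoeff p j g < p j := by
  have := lcoeff_nonneg p j g
  have := lcoeff_lt j g
  omega

theorem lcoeff_eq_emod (j : ι) [NeZero (p j)] {g : StringGroup p} {a : ℤ}
    (h : residue p j g = a) : lcoeff p j g = a % p j := by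
  rw [lcoeff, h, ZMod.val_intCast]

theorem lcoeff_mk (j : ι) [NeZero (p j)] (v : ι → ℤ) :
    lcoeff p j (QuotientAddGroup.mk v) = v j % p j :=
  lcoeff_eq_emod j (residue_mk p j v)

theorem residue_eq_lcoeff (j : ι) [NeZero (p j)] (g : StringGroup p) :
    residue p j g = (lcoeff p j g : ZMod (p j)) := by
  simp [lcoeff]

theorem lcoeff_add (j : ι) [NeZero (p j)] (a b : StringGroup p) :
    lcoeff p j (a + b) = (lcoeff p j a + lcoeff p j b) % p j :=
  lcoeff_eq_emod j (by rw [map_add, residue_eq_lcoeff j a, residue_eq_lcoeff j b]; push_cast; rfl)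

variable [Fintype ι]

theorem mk_eq_sum (v : ι → ℤ) :
    (QuotientAddGroup.mk v : StringGroup p) = ∑ j, v j • xgen p j := by
  simp_rw [xgen, ← QuotientAddGroup.mk_zsmul, ← QuotientAddGroup.mk_sum]
  congr 1
  ext k
  simp [Pi.single_apply]

theorem sum_lcoeff_div_nonneg (g : StringGroup p) : 0 ≤ ∑ j, (lcoeff p j g : ℚ) / p j :=
  sum_nonneg fun j _ => div_nonneg (by exact_mod_cast lcoeff_nonneg p j g) (Nat.cast_nonneg _)

variable [∀ i, NeZero (p i)]

variable (p) in
def degree : StringGroup p →+ ℚ :=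
  QuotientAddGroup.lift _
    { toFun := fun v => ∑ i, (v i : ℚ) / p i
      map_zero' := by simp
      map_add' := fun v w => by simp [add_div, sum_add_distrib] } <| by
    rw [AddSubgroup.closure_le]
    rintro _ ⟨a, b, rfl⟩
    simp [Pi.single_apply, sub_div, sum_sub_distrib, ite_div, NeZero.ne]

theorem degree_mk (v : ι → ℤ) :
    degree p (QuotientAddGroup.mk v) = ∑ i, (v i : ℚ) / p i := rfl

theorem degree_xgen (i : ι) : degree p (xgen p i) = 1 / p i := by
  simp [xgen, degree_mk, Pi.single_apply, ite_div]

theorem degree_canon (i : ι) : degree p (canon p i) = 1 := by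
  simp [canon, degree_xgen, NeZero.ne]

variable (p) in
/-- `lcoeff` and `mcoeff` are the coefficients of the normal form `g = ∑ l_j x_j + m c` with
`0 ≤ l_j < p_j`; the floor only converts the integer `degree g - ∑ l_j / p_j` to `ℤ`. -/
def mcoeff (g : StringGroup p) : ℤ := ⌊degree p g - ∑ j, (lcoeff p j g : ℚ) / p j⌋

theorem mcoeff_mk (v : ι → ℤ) : mcoeff p (QuotientAddGroup.mk v) = ∑ j, v j / (p j : ℤ) := by
  have h (j : ι) : (v j : ℚ) / p j - ((v j % p j : ℤ) : ℚ) / p j = ((v j / p j : ℤ) : ℚ) := by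
    rw [intCast_div_natCast_eq_ediv_add_emod (v j)]
    ring
  rw [mcoeff, degree_mk, ← sum_sub_distrib]
  simp_rw [lcoeff_mk, h]
  rw [← Int.cast_sum, Int.floor_intCast]

theorem degree_eq_mcoeff_add (g : StringGroup p) :
    degree p g = mcoeff p g + ∑ j, (lcoeff p j g : ℚ) / p j := by
  obtain ⟨v, rfl⟩ := QuotientAddGroup.mk_surjective g
  simp_rw [degree_mk, mcoeff_mk, lcoeff_mk, intCast_div_natCast_eq_ediv_add_emod (v _), sum_add_distrib]
  push_cast
  rfl

theorem eq_sum_lcoeff_add_mcoeff (i : ι) (g : StringGroup p) :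
    g = ∑ j, lcoeff p j g • xgen p j + mcoeff p g • canon p i := by
  obtain ⟨v, rfl⟩ := QuotientAddGroup.mk_surjective g
  have h (j : ι) : (v j % p j) • xgen p j + (v j / p j) • canon p i = v j • xgen p j := by
    rw [canon_eq_canon p i j, canon, smul_smul, ← add_zsmul, Int.emod_add_ediv_mul]
  rw [mcoeff_mk, Finset.sum_smul (R := ℤ) (M := StringGroup p), ← sum_add_distrib]
  simp_rw [lcoeff_mk, h]
  exact mk_eq_sum v

theorem lcoeff_sum_add (i : ι) {l : ι → ℤ} (hl : ∀ j, 0 ≤ l j ∧ l j < p j) (m : ℤ) (j : ι) :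
    lcoeff p j (∑ k, l k • xgen p k + m • canon p i) = l j := by
  rw [lcoeff_eq_emod j (a := l j), Int.emod_eq_of_lt (hl j).1 (hl j).2]
  simp [residue_xgen, residue_canon]

theorem mcoeff_sum_add (i : ι) {l : ι → ℤ} (hl : ∀ j, 0 ≤ l j ∧ l j < p j) (m : ℤ) :
    mcoeff p (∑ k, l k • xgen p k + m • canon p i) = m := by
  have h := degree_eq_mcoeff_add (∑ k, l k • xgen p k + m • canon p i)
  simp only [lcoeff_sum_add i hl, map_add, map_sum, map_zsmul, degree_xgen, degree_canon,
    zsmul_eq_mul, mul_one, mul_one_div] at h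
  exact_mod_cast (by linarith : (mcoeff p _ : ℚ) = m)

theorem lcoeff_mcoeff_injective [Nonempty ι] :
    Function.Injective fun g : StringGroup p => (fun j => lcoeff p j g, mcoeff p g) := by
  intro a b h
  simp only [Prod.mk.injEq, funext_iff] at h
  rw [eq_sum_lcoeff_add_mcoeff (Classical.arbitrary ι) a,
    eq_sum_lcoeff_add_mcoeff (Classical.arbitrary ι) b, h.2]
  simp_rw [h.1]

theorem sum_lcoeff_div_le_card (g : StringGroup p) :
    ∑ j, (lcoeff p j g : ℚ) / p j ≤ Fintype.card ι := by
  rw [← nsmul_one, ← card_univ, ← sum_const]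
  refine sum_le_sum fun j _ => div_le_one_of_le₀ ?_ (Nat.cast_nonneg _)
  exact_mod_cast (lcoeff_lt j g).le

theorem mcoeff_le_degree (g : StringGroup p) : (mcoeff p g : ℚ) ≤ degree p g := by
  linarith [degree_eq_mcoeff_add g, sum_lcoeff_div_nonneg g]

theorem degree_le_mcoeff_add_card (g : StringGroup p) :
    degree p g ≤ mcoeff p g + Fintype.card ι := by
  linarith [degree_eq_mcoeff_add g, sum_lcoeff_div_le_card g]

theorem finite_ker_degree [Nonempty ι] : ((degree p).ker : Set (StringGroup p)).Finite := by
  refine ((Set.Finite.pi fun j => Set.finite_Icc (0 : ℤ) (p j)).prod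
    (Set.finite_Icc (-(Fintype.card ι : ℤ)) 0)).preimage lcoeff_mcoeff_injective.injOn
    |>.subset fun g (hg : degree p g = 0) => ?_
  have h1 := mcoeff_le_degree g
  have h2 := degree_le_mcoeff_add_card g
  rw [hg] at h1 h2
  refine ⟨fun j _ => ⟨lcoeff_nonneg p j g, (lcoeff_lt j g).le⟩, ?_, ?_⟩
  · exact_mod_cast (by linarith : -(Fintype.card ι : ℚ) ≤ mcoeff p g)
  · exact_mod_cast h1

theorem mcoeff_zero : mcoeff p 0 = 0 := by simpa using mcoeff_mk (p := p) 0

theorem mcoeff_add (a b : StringGroup p) :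
    mcoeff p (a + b) = mcoeff p a + mcoeff p b + ∑ j, (lcoeff p j a + lcoeff p j b) / p j := by
  have h := degree_eq_mcoeff_add (a + b)
  have hl (j : ι) : (lcoeff p j (a + b) : ℚ) / p j = ((lcoeff p j a + lcoeff p j b : ℤ) : ℚ) / p j
      - (((lcoeff p j a + lcoeff p j b) / p j : ℤ) : ℚ) := by
    rw [lcoeff_add, intCast_div_natCast_eq_ediv_add_emod (lcoeff p j a + lcoeff p j b)]
    ring
  simp_rw [hl, sum_sub_distrib, map_add, degree_eq_mcoeff_add a, degree_eq_mcoeff_add b] at h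
  push_cast [add_div, sum_add_distrib] at h
  exact_mod_cast (by push_cast; linarith : (mcoeff p (a + b) : ℚ) =
    ((mcoeff p a + mcoeff p b + ∑ j, (lcoeff p j a + lcoeff p j b) / p j : ℤ) : ℚ))

theorem mcoeff_add_of_residue_eq_zero {b : StringGroup p} (hb : ∀ j, residue p j b = 0)
    (a : StringGroup p) : (mcoeff p (a + b) : ℚ) = mcoeff p a + degree p b := by
  have h := degree_eq_mcoeff_add (a + b)
  have hl (j : ι) : lcoeff p j (a + b) = lcoeff p j a := by rw [lcoeff, lcoeff, map_add, hb, add_zero]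
  simp_rw [hl, map_add, degree_eq_mcoeff_add a] at h
  linarith

theorem mcoeff_add_zsmul_canon (a : StringGroup p) (z : ℤ) (i : ι) :
    mcoeff p (a + z • canon p i) = mcoeff p a + z := by
  have := mcoeff_add_of_residue_eq_zero (b := z • canon p i) (fun j => by
    rw [map_zsmul, residue_canon, smul_zero]) a
  rw [map_zsmul, degree_canon, zsmul_eq_mul, mul_one] at this
  exact_mod_cast this

theorem mcoeff_add_zsmul_of_dvd {N : ℤ} (hN : ∀ j, (p j : ℤ) ∣ N) (a b : StringGroup p) :
    (mcoeff p (a + N • b) : ℚ) = mcoeff p a + N * degree p b := by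
  rw [mcoeff_add_of_residue_eq_zero _ a, map_zsmul, zsmul_eq_mul]
  intro j
  rw [map_zsmul, zsmul_eq_mul, (ZMod.intCast_zmod_eq_zero_iff_dvd N (p j)).2 (hN j), zero_mul]

variable (p) in
def mult (g : StringGroup p) : ℕ := (mcoeff p g + 1).toNat

theorem mult_zero : mult p 0 = 1 := by simp [mult, mcoeff_zero]

variable (p) in
def dualizing (i : ι) : StringGroup p := ((Fintype.card ι : ℤ) - 2) • canon p i - ∑ j, xgen p j

theorem dualizing_sub_eq (i : ι) (g : StringGroup p) :
    dualizing p i - g =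
      ∑ j, ((p j : ℤ) - 1 - lcoeff p j g) • xgen p j + (-2 - mcoeff p g) • canon p i := by
  have h (j : ι) : ((p j : ℤ) - 1 - lcoeff p j g) • xgen p j =
      canon p i - xgen p j - lcoeff p j g • xgen p j := by
    rw [sub_zsmul, sub_zsmul, one_zsmul, canon_eq_canon p i j, canon]
    abel
  conv_lhs => rw [eq_sum_lcoeff_add_mcoeff i g]
  simp_rw [h, dualizing, sum_sub_distrib, sum_const, card_univ, sub_zsmul, natCast_zsmul]
  abel

theorem lcoeff_dualizing_sub (i j : ι) (g : StringGroup p) :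
    lcoeff p j (dualizing p i - g) = p j - 1 - lcoeff p j g := by
  rw [dualizing_sub_eq, lcoeff_sum_add i fun j => sub_one_sub_lcoeff_bounds g j]

theorem mcoeff_dualizing_sub (i : ι) (g : StringGroup p) :
    mcoeff p (dualizing p i - g) = -2 - mcoeff p g := by
  rw [dualizing_sub_eq, mcoeff_sum_add i fun j => sub_one_sub_lcoeff_bounds g j]

theorem lcoeff_dualizing (i j : ι) : lcoeff p j (dualizing p i) = p j - 1 := by
  simpa [lcoeff_zero] using lcoeff_dualizing_sub i j (0 : StringGroup p)

theorem mult_sub_mult_dualizing_sub (i : ι) (g : StringGroup p) :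
    (mult p g : ℤ) - mult p (dualizing p i - g) = mcoeff p g + 1 := by
  simp only [mult, mcoeff_dualizing_sub]
  omega

theorem eq_zero_of_forall_mcoeff_dualizing_sub_add (i : ι) {H : AddSubgroup (StringGroup p)}
    (hH : ∀ j, ∃ x ∈ H, lcoeff p j (dualizing p i - x) = 0) {δ : StringGroup p}
    (hδ : ∀ x ∈ H, mcoeff p (dualizing p i - x + δ) = mcoeff p (dualizing p i - x)) :
    δ = 0 := by
  have hp (j : ι) : (0 : ℤ) < p j := by have := NeZero.ne (p j); omega
  let carry (a : StringGroup p) (j : ι) : ℤ := (lcoeff p j a + lcoeff p j δ) / p j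
  have hsum (x : StringGroup p) (hx : x ∈ H) :
      ∑ j, carry (dualizing p i - x) j = -mcoeff p δ := by
    have := mcoeff_add (dualizing p i - x) δ
    rw [hδ x hx] at this
    simp only [carry]
    omega
  have hle (x : StringGroup p) (j : ι) : carry (dualizing p i - x) j ≤ carry (dualizing p i) j := by
    refine Int.ediv_le_ediv (hp j) ?_
    rw [lcoeff_dualizing]
    linarith [lcoeff_lt j (dualizing p i - x)]
  have hcarry (x : StringGroup p) (hx : x ∈ H) (j : ι) :
      carry (dualizing p i - x) j = carry (dualizing p i) j := by
    refine (sum_eq_sum_iff_of_le fun j _ => hle x j).1 ?_ j (mem_univ j)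
    rw [hsum x hx, ← hsum 0 H.zero_mem, sub_zero]
  have hl (j : ι) : lcoeff p j δ = 0 := by
    obtain ⟨x, hx, h0⟩ := hH j
    have h1 := hcarry x hx j
    simp only [carry, h0, zero_add, lcoeff_dualizing,
      Int.ediv_eq_zero_of_lt (lcoeff_nonneg p j δ) (lcoeff_lt j δ)] at h1
    have := (Int.ediv_lt_iff_lt_mul (hp j)).1 (by omega : (p j - 1 + lcoeff p j δ) / p j < 1)
    linarith [lcoeff_nonneg p j δ]
  have hm : mcoeff p δ = 0 := by
    have := hsum 0 H.zero_mem
    simp only [carry, sub_zero, lcoeff_dualizing, hl, add_zero] at this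
    rw [sum_eq_zero fun j _ => Int.ediv_eq_zero_of_lt (by linarith [hp j]) (by linarith)] at this
    omega
  rw [eq_sum_lcoeff_add_mcoeff i δ, hm]
  simp [hl]

end StringGroup

namespace StringGroup

variable {ι : Type} [Fintype ι] [DecidableEq ι] {p : ι → ℕ} [∀ i, NeZero (p i)]

theorem eq_mult_of_forall (i : ι) {f : StringGroup p → ℕ}
    (hf : ∀ (l : ι → ℤ) (m : ℤ), (∀ j, 0 ≤ l j ∧ l j < (p j : ℤ)) →
      f (∑ j, l j • xgen p j + m • canon p i) = (m + 1).toNat) :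
    f = mult p := funext fun g => by
  rw [eq_sum_lcoeff_add_mcoeff i g, hf _ _ fun j => ⟨lcoeff_nonneg p j g, lcoeff_lt j g⟩,
    mult, ← eq_sum_lcoeff_add_mcoeff]

theorem mcoeff_eq_of_frequently_mult_add_zsmul_canon (i : ι) {a b : StringGroup p}
    (h : ∃ᶠ z : ℤ in atTop, mult p (a + z • canon p i) = mult p (b + z • canon p i)) :
    mcoeff p a = mcoeff p b := by
  obtain ⟨z, hz, ha, hb⟩ := (h.and_eventually
    ((eventually_ge_atTop (-mcoeff p a)).and (eventually_ge_atTop (-mcoeff p b)))).exists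
  simp only [mult, mcoeff_add_zsmul_canon] at hz
  omega

end StringGroup

section Admissible

variable {ι κ : Type} [Fintype ι] [DecidableEq ι] [Fintype κ] [DecidableEq κ]
  {p : ι → ℕ} {q : κ → ℕ} [∀ i, NeZero (p i)] [∀ j, NeZero (q j)]
  {π : StringGroup p →+ StringGroup q}

open StringGroup

theorem Admissible.finsum_mult_add_ker (hπ : Admissible p q (mult p) (mult q) π)
    (y : StringGroup p) :
    ∑ᶠ k ∈ (π.ker : Set (StringGroup p)), mult p (y + k) = mult q (π y) := by
  have hfib : π ⁻¹' {π y} = (y + ·) '' π.ker := by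
    ext x
    constructor
    · intro hx
      refine ⟨x - y, ?_, add_sub_cancel y x⟩
      simpa [sub_eq_zero] using hx
    · rintro ⟨k, hk, rfl⟩
      simpa using hk
  rw [← hπ.2 _ ⟨y, rfl⟩, hfib, finsum_mem_image (add_right_injective y).injOn]

theorem Admissible.mult_eq_zero_of_mem_ker (hπ : Admissible p q (mult p) (mult q) π)
    {k : StringGroup p} (hk : k ∈ π.ker) (hk0 : k ≠ 0) : mult p k = 0 := by
  classical
  have h1 : ∑ᶠ x ∈ (π.ker : Set (StringGroup p)), mult p x = 1 := by
    simpa [mult_zero] using hπ.finsum_mult_add_ker 0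
  have hfin : ((π.ker : Set (StringGroup p)) ∩ Function.support (mult p)).Finite := by
    by_contra h
    rw [finsum_mem_eq_zero_of_infinite h] at h1
    exact zero_ne_one h1
  rw [finsum_mem_eq_sum _ hfin] at h1
  by_contra hk'
  have hsub : ({0, k} : Finset _) ⊆ hfin.toFinset := by
    intro x hx
    rcases Finset.mem_insert.1 hx with rfl | hx
    · simp [mult_zero]
    · rw [Finset.mem_singleton.1 hx]
      simpa using ⟨hk, hk'⟩
  have := Finset.sum_le_sum_of_subset hsub (f := mult p)
  rw [Finset.sum_pair (Ne.symm hk0), h1, mult_zero] at this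
  omega

theorem Admissible.degree_eq_zero_of_mem_ker (hπ : Admissible p q (mult p) (mult q) π)
    {k : StringGroup p} (hk : k ∈ π.ker) : degree p k = 0 := by
  refine eq_zero_of_forall_intCast_mul_le (C := (Fintype.card ι : ℚ)) fun z => ?_
  rw [← zsmul_eq_mul, ← map_zsmul]
  by_cases hz : z • k = 0
  · simp [hz]
  · have h0 := hπ.mult_eq_zero_of_mem_ker (π.ker.zsmul_mem hk z) hz
    have h1 := degree_le_mcoeff_add_card (z • k)
    have h2 : mcoeff p (z • k) ≤ -1 := by simp only [mult] at h0; omega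
    have h3 : (mcoeff p (z • k) : ℚ) ≤ -1 := by exact_mod_cast h2
    linarith

theorem Admissible.finite_ker [Nonempty ι] (hπ : Admissible p q (mult p) (mult q) π) :
    Finite π.ker :=
  (finite_ker_degree.subset fun _ hk => hπ.degree_eq_zero_of_mem_ker hk).to_subtype

theorem Admissible.mult_map (hπ : Admissible p q (mult p) (mult q) π) [Fintype π.ker]
    (y : StringGroup p) : mult q (π y) = ∑ k : π.ker, mult p (y + k) := by
  rw [← hπ.finsum_mult_add_ker y, ← finsum_eq_sum_of_fintype]
  exact (finsum_subtype_eq_finsum_cond _).symm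

theorem Admissible.eventually_mcoeff_map_add (hπ : Admissible p q (mult p) (mult q) π)
    [Fintype π.ker] (i : ι) (y : StringGroup p) :
    ∀ᶠ z : ℤ in atTop, mcoeff q (π (y + z • canon p i)) + 1 =
      ∑ k : π.ker, (mcoeff p (y + k) + 1) + z * Fintype.card π.ker := by
  filter_upwards [eventually_all.2 fun k : π.ker => eventually_ge_atTop (-mcoeff p (y + k))]
    with z hz
  have hterm (k : π.ker) : (mult p (y + z • canon p i + k) : ℤ) = mcoeff p (y + k) + 1 + z := by
    rw [mult, add_right_comm, mcoeff_add_zsmul_canon, Int.toNat_of_nonneg (by linarith [hz k])]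
    ring
  have h := congrArg (Nat.cast : ℕ → ℤ) (hπ.mult_map (y + z • canon p i))
  rw [Nat.cast_sum] at h
  simp_rw [hterm] at h
  have hpos : 0 < ∑ k : π.ker, (mcoeff p (y + k) + 1 + z) :=
    sum_pos (fun k _ => by linarith [hz k]) univ_nonempty
  rw [mult] at h
  simp only [sum_add_distrib, sum_const, card_univ, nsmul_eq_mul] at h hpos ⊢
  rw [Int.toNat_of_nonneg (by omega)] at h
  linarith

theorem Admissible.degree_map_canon (hπ : Admissible p q (mult p) (mult q) π) [Fintype π.ker]
    (i : ι) : degree q (π (canon p i)) = Fintype.card π.ker := by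
  set N : ℤ := ∏ j, (q j : ℤ)
  have hN : ∀ j, (q j : ℤ) ∣ N := fun j => dvd_prod_of_mem _ (mem_univ j)
  have hN0 : 0 < N := prod_pos fun j _ => by have := NeZero.ne (q j); omega
  obtain ⟨M, hM⟩ := (hπ.eventually_mcoeff_map_add i 0).exists_forall_of_atTop
  have h1 := hM M le_rfl
  have h2 := hM (M + N) (by omega)
  have h3 : π (0 + (M + N) • canon p i) = π (0 + M • canon p i) + N • π (canon p i) := by
    simp only [zero_add, add_zsmul, map_add, map_zsmul]
  have h4 := mcoeff_add_zsmul_of_dvd hN (π (0 + M • canon p i)) (π (canon p i))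
  rw [← h3] at h4
  have h5 : (N : ℚ) * degree q (π (canon p i)) = N * Fintype.card π.ker := by
    have h1' := congrArg (Int.cast : ℤ → ℚ) h1
    have h2' := congrArg (Int.cast : ℤ → ℚ) h2
    push_cast at h1' h2'
    linarith
  exact mul_left_cancel₀ (by exact_mod_cast hN0.ne') h5

theorem Admissible.mcoeff_map_add_one (hπ : Admissible p q (mult p) (mult q) π) [Fintype π.ker]
    [Nonempty ι] (y : StringGroup p) :
    mcoeff q (π y) + 1 = ∑ k : π.ker, (mcoeff p (y + k) + 1) := by
  let i : ι := Classical.arbitrary ι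
  set N : ℤ := ∏ j, (q j : ℤ)
  have hN : ∀ j, (q j : ℤ) ∣ N := fun j => dvd_prod_of_mem _ (mem_univ j)
  have hN0 : 0 < N := prod_pos fun j _ => by have := NeZero.ne (q j); omega
  obtain ⟨M, hM⟩ := (hπ.eventually_mcoeff_map_add i y).exists_forall_of_atTop
  have h1 := hM (|M| * N) (le_trans (le_abs_self M) (le_mul_of_one_le_right (abs_nonneg M) hN0))
  have h2 : π (y + (|M| * N) • canon p i) = π y + N • (|M| • π (canon p i)) := by
    rw [map_add, map_zsmul, smul_smul, mul_comm]
  have h3 := mcoeff_add_zsmul_of_dvd hN (π y) (|M| • π (canon p i))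
  rw [← h2, map_zsmul, hπ.degree_map_canon, zsmul_eq_mul] at h3
  have h1' := congrArg (Int.cast : ℤ → ℚ) h1
  push_cast at h1' h3
  exact_mod_cast (by push_cast; linarith : ((mcoeff q (π y) + 1 : ℤ) : ℚ) =
    ((∑ k : π.ker, (mcoeff p (y + k) + 1) : ℤ) : ℚ))

theorem Admissible.map_canon (hπ : Admissible p q (mult p) (mult q) π) [Fintype π.ker]
    (i : ι) (j : κ) : π (canon p i) = (Fintype.card π.ker : ℤ) • canon q j := by
  have : Nonempty ι := ⟨i⟩
  have hshift (k : StringGroup p) : mcoeff p (canon p i + k) + 1 = mcoeff p k + 1 + 1 := by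
    rw [add_comm (canon p i), ← one_zsmul (canon p i), mcoeff_add_zsmul_canon]
  have hm : mcoeff q (π (canon p i)) = Fintype.card π.ker := by
    have h1 := hπ.mcoeff_map_add_one (canon p i)
    have h0 := hπ.mcoeff_map_add_one 0
    simp only [hshift, sum_add_distrib, zero_add, sum_const, card_univ, nsmul_one,
      map_zero, mcoeff_zero] at h1 h0
    omega
  have hl : ∀ l, lcoeff q l (π (canon p i)) = 0 := by
    have h := degree_eq_mcoeff_add (π (canon p i))
    rw [hπ.degree_map_canon, hm, Int.cast_natCast, left_eq_add] at h
    intro l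
    have := (sum_eq_zero_iff_of_nonneg fun l _ => div_nonneg (by exact_mod_cast lcoeff_nonneg q l _)
      (Nat.cast_nonneg _)).1 h l (mem_univ l)
    simpa [NeZero.ne] using this
  rw [eq_sum_lcoeff_add_mcoeff j (π (canon p i)), hm]
  simp [hl]

theorem Admissible.mult_map_dualizing_sub (hπ : Admissible p q (mult p) (mult q) π)
    [Fintype π.ker] (i : ι) (j : κ) (y : StringGroup p) :
    mult q (π (dualizing p i) - π y) = mult q (dualizing q j - π y) := by
  have : Nonempty ι := ⟨i⟩
  have hsym : ∑ k : π.ker, mult p (dualizing p i - y + k) =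
      ∑ k : π.ker, mult p (dualizing p i - (y + (k : StringGroup p))) :=
    Fintype.sum_equiv (Equiv.neg _) _ _ fun k => by
      simp only [Equiv.neg_apply, AddSubgroup.coe_neg]
      congr 1
      abel
  have h : (mult q (π y) : ℤ) - mult q (π (dualizing p i) - π y) = mcoeff q (π y) + 1 := by
    rw [← map_sub, hπ.mult_map, hπ.mult_map, hsym, hπ.mcoeff_map_add_one]
    push_cast
    rw [← sum_sub_distrib]
    exact sum_congr rfl fun k _ => mult_sub_mult_dualizing_sub i (y + (k : StringGroup p))
  have h' := mult_sub_mult_dualizing_sub j (π y)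
  omega

theorem Admissible.mcoeff_map_dualizing_sub (hπ : Admissible p q (mult p) (mult q) π)
    [Fintype π.ker] (i : ι) (j : κ) (y : StringGroup p) :
    mcoeff q (π (dualizing p i) - π y) = mcoeff q (dualizing q j - π y) := by
  have hn : 0 < (Fintype.card π.ker : ℤ) := by exact_mod_cast Fintype.card_pos
  refine mcoeff_eq_of_frequently_mult_add_zsmul_canon j <| frequently_atTop.2 fun M =>
    ⟨|M| * Fintype.card π.ker, le_trans (le_abs_self M) (le_mul_of_one_le_right (abs_nonneg M) hn),
      ?_⟩
  have h := hπ.mult_map_dualizing_sub i j (y - |M| • canon p i)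
  rwa [map_sub, map_zsmul, hπ.map_canon i j, smul_smul, sub_sub_eq_add_sub, sub_sub_eq_add_sub,
    add_sub_right_comm, add_sub_right_comm (dualizing q j)] at h

theorem Admissible.map_dualizing (hπ : Admissible p q (mult p) (mult q) π) (i : ι) (j : κ) :
    π (dualizing p i) = dualizing q j := by
  have : Nonempty ι := ⟨i⟩
  have := hπ.finite_ker
  have := Fintype.ofFinite π.ker
  rw [← sub_eq_zero]
  refine eq_zero_of_forall_mcoeff_dualizing_sub_add j (H := π.range) (fun l => ?_) ?_
  · obtain ⟨x, hx, hxl⟩ := hπ.1 l (residue q l) (residue_xgen q l) (residue q l (dualizing q j))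
    refine ⟨x, hx, ?_⟩
    rw [lcoeff_eq_emod l (a := 0) (by rw [map_sub, hxl, sub_self, Int.cast_zero]), Int.zero_emod]
  · rintro _ ⟨y, rfl⟩
    rw [sub_add_sub_cancel']
    exact hπ.mcoeff_map_dualizing_sub i j y

end Admissible

open StringGroup in
theorem stmt13 {t s : ℕ} (p : Fin (t+1) → ℕ) (q : Fin (s+1) → ℕ)
    (hp : ∀ i, 2 ≤ p i) (hq : ∀ j, 2 ≤ q j)
    (multp : StringGroup p → ℕ) (multq : StringGroup q → ℕ)
    (hmultp : ∀ (l : Fin (t+1) → ℤ) (m : ℤ), (∀ i, 0 ≤ l i ∧ l i < (p i : ℤ)) →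
      multp (∑ i, l i • xgen p i + m • canon p 0) = (m + 1).toNat)
    (hmultq : ∀ (l : Fin (s+1) → ℤ) (m : ℤ), (∀ j, 0 ≤ l j ∧ l j < (q j : ℤ)) →
      multq (∑ j, l j • xgen q j + m • canon q 0) = (m + 1).toNat)
    (π : StringGroup p →+ StringGroup q)
    (hadm : Admissible p q multp multq π) :
    π ((((t : ℕ) + 1 : ℤ) - 2) • canon p 0 - ∑ i, xgen p i) =
      (((s : ℕ) + 1 : ℤ) - 2) • canon q 0 - ∑ j, xgen q j := by
  have : ∀ i, NeZero (p i) := fun i => ⟨by have := hp i; omega⟩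
  have : ∀ j, NeZero (q j) := fun j => ⟨by have := hq j; omega⟩
  obtain rfl := eq_mult_of_forall 0 hmultp
  obtain rfl := eq_mult_of_forall 0 hmultq
  simpa [dualizing] using hadm.map_dualizing 0 0
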